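/- arXiv:2305.01709 — 2 statements merged into one kernel-verified Lean document; each statement's English description precedes it below -/
import Mathlib

section
/- Let Y be a {0,1}-valued random variable on a probability space with S a real-valued random variable, let m denote a version of the conditional expectation E[Y | σ(S)], let μ = E[Y], and let g, h : ℝ → ℝ be bounded measurable functions. Then Var[ g(S)(Y − μ) + h(S) ] − Var[ g(S)(Y − m) ] = Var[ g(S)(m − μ) + h(S) ], which is nonnegative; in particular Var[ g(S)(Y − μ) + h(S) ] ≥ Var[ g(S)(Y − m) ]. -/
open MeasureTheory ProbabilityTheory
open scoped ENNReal

/-!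
The supROC influence function splits as `U + V` with `U = g(S)(Y - m)` and
`V = g(S)(m - E Y) + h(S)`. Since `g(S) m` is a version of `E[g(S) Y | σ(S)]`, `U` is a
conditional-expectation residual, hence orthogonal in `L²` to every square-integrable
`σ(S)`-measurable variable (pull-out property), in particular to `V` and to constants. So
`cov(U, V) = 0` and `Var(U + V) = Var U + Var V`.
-/

section

variable {Ω : Type*} {𝒢 m₀ : MeasurableSpace Ω} {μ : Measure Ω} [IsProbabilityMeasure μ]

theorem covariance_sub_condExp_eq_zero (h𝒢 : 𝒢 ≤ m₀) {Z W : Ω → ℝ} (hZ : MemLp Z 2 μ)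
    (hW : MemLp W 2 μ) (hW𝒢 : AEStronglyMeasurable[𝒢] W μ) :
    cov[Z - μ[Z | 𝒢], W; μ] = 0 := by
  have hZ𝒢 : MemLp μ[Z | 𝒢] 2 μ := hZ.condExp one_le_two
  have h_pull : μ[W * Z | 𝒢] =ᵐ[μ] W * μ[Z | 𝒢] :=
    condExp_mul_of_aestronglyMeasurable_left hW𝒢 (hW.integrable_mul hZ) (hZ.integrable one_le_two)
  have h_mean : μ[Z - μ[Z | 𝒢]] = 0 := by
    rw [integral_sub' (hZ.integrable one_le_two) integrable_condExp, integral_condExp h𝒢, sub_self]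
  have h_orth : μ[(Z - μ[Z | 𝒢]) * W] = 0 := by
    rw [sub_mul, integral_sub' (hZ.integrable_mul hW) (hZ𝒢.integrable_mul hW), mul_comm Z,
      ← integral_condExp h𝒢, integral_congr_ae h_pull, mul_comm W, sub_self]
  rw [covariance_eq_sub (hZ.sub hZ𝒢) hW, h_orth, h_mean, zero_mul, sub_zero]

theorem variance_sub_condExp_add (h𝒢 : 𝒢 ≤ m₀) {Z W : Ω → ℝ} (hZ : MemLp Z 2 μ)
    (hW : MemLp W 2 μ) (hW𝒢 : AEStronglyMeasurable[𝒢] W μ) :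
    Var[Z - μ[Z | 𝒢] + W; μ] = Var[Z - μ[Z | 𝒢]; μ] + Var[W; μ] := by
  rw [variance_add (hZ.sub (hZ.condExp one_le_two)) hW,
    covariance_sub_condExp_eq_zero h𝒢 hZ hW hW𝒢, mul_zero, add_zero]

theorem variance_mul_sub_add_eq_of_ae_eq_condExp (h𝒢 : 𝒢 ≤ m₀) {Y M G H : Ω → ℝ}
    (hY : MemLp Y 2 μ) (hM : M =ᵐ[μ] μ[Y | 𝒢]) (hG𝒢 : AEStronglyMeasurable[𝒢] G μ)
    (hG : MemLp G ∞ μ) (hH𝒢 : AEStronglyMeasurable[𝒢] H μ) (hH : MemLp H 2 μ) (c : ℝ) :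
    variance (fun ω ↦ G ω * (Y ω - c) + H ω) μ
      = variance (fun ω ↦ G ω * (Y ω - M ω)) μ
        + variance (fun ω ↦ G ω * (M ω - c) + H ω) μ := by
  have hGY : MemLp (G * Y) 2 μ := hY.mul hG
  have h_condExp : μ[G * Y | 𝒢] =ᵐ[μ] G * M :=
    (condExp_mul_of_aestronglyMeasurable_left hG𝒢 (hGY.integrable one_le_two)
      (hY.integrable one_le_two)).trans ((ae_eq_refl G).mul hM.symm)
  have hM2 : MemLp M 2 μ := (hY.condExp one_le_two).ae_eq hM.symm
  have hM𝒢 : AEStronglyMeasurable[𝒢] M μ :=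
    stronglyMeasurable_condExp.aestronglyMeasurable.congr hM.symm
  have hW : MemLp (fun ω ↦ G ω * (M ω - c) + H ω) 2 μ :=
    ((hM2.sub (memLp_const c)).mul' hG).add hH
  have hW𝒢 : AEStronglyMeasurable[𝒢] (fun ω ↦ G ω * (M ω - c) + H ω) μ :=
    (hG𝒢.mul (hM𝒢.sub aestronglyMeasurable_const)).add hH𝒢
  have h_sum : (fun ω ↦ G ω * (Y ω - c) + H ω)
      =ᵐ[μ] G * Y - μ[G * Y | 𝒢] + fun ω ↦ G ω * (M ω - c) + H ω :=
    h_condExp.mono fun ω hω ↦ by simp only [Pi.add_apply, Pi.sub_apply, Pi.mul_apply, hω]; ring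
  have h_residual : (fun ω ↦ G ω * (Y ω - M ω)) =ᵐ[μ] G * Y - μ[G * Y | 𝒢] :=
    h_condExp.mono fun ω hω ↦ by simp only [Pi.sub_apply, Pi.mul_apply, hω]; ring
  rw [variance_congr h_sum, variance_congr h_residual, variance_sub_condExp_add h𝒢 hGY hW hW𝒢]

end

/-- **Corollary 1 (efficiency gain of ssROC over supROC)**: for a binary label `Y`,
score `S`, a version `m` of `E[Y | σ(S)]`, `μY = E[Y]`, and bounded measurable
`g, h`, `Var[g(S)(Y − μY) + h(S)] − Var[g(S)(Y − m)] = Var[g(S)(m − μY) + h(S)] ≥ 0`;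
in particular `Var[g(S)(Y − μY) + h(S)] ≥ Var[g(S)(Y − m)]`. -/
theorem stmt_2 {Ω : Type*} [MeasurableSpace Ω] (μ : Measure Ω) [IsProbabilityMeasure μ]
    (Y S : Ω → ℝ) (hY : Measurable Y) (hS : Measurable S)
    (hY01 : ∀ ω, Y ω = 0 ∨ Y ω = 1)
    (m : Ω → ℝ)
    (hm : m =ᵐ[μ] μ[Y | MeasurableSpace.comap S inferInstance])
    (g h : ℝ → ℝ) (hg : Measurable g) (hh : Measurable h)
    (Cg Ch : ℝ) (hgb : ∀ x, |g x| ≤ Cg) (hhb : ∀ x, |h x| ≤ Ch) :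
    (variance (fun ω => g (S ω) * (Y ω - ∫ x, Y x ∂μ) + h (S ω)) μ
        - variance (fun ω => g (S ω) * (Y ω - m ω)) μ
      = variance (fun ω => g (S ω) * (m ω - ∫ x, Y x ∂μ) + h (S ω)) μ)
    ∧ 0 ≤ variance (fun ω => g (S ω) * (m ω - ∫ x, Y x ∂μ) + h (S ω)) μ
    ∧ variance (fun ω => g (S ω) * (Y ω - m ω)) μ
        ≤ variance (fun ω => g (S ω) * (Y ω - ∫ x, Y x ∂μ) + h (S ω)) μ := by
  have hS𝒢 : Measurable[MeasurableSpace.comap S inferInstance] S := comap_measurable S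
  have hY2 : MemLp Y 2 μ := .of_bound hY.aestronglyMeasurable 1 <| ae_of_all _ fun ω ↦ by
    rcases hY01 ω with hω | hω <;> simp [hω]
  have hG : MemLp (fun ω ↦ g (S ω)) ∞ μ :=
    memLp_top_of_bound (hg.comp hS).aestronglyMeasurable Cg (ae_of_all _ fun ω ↦ hgb (S ω))
  have hH : MemLp (fun ω ↦ h (S ω)) 2 μ :=
    .of_bound (hh.comp hS).aestronglyMeasurable Ch (ae_of_all _ fun ω ↦ hhb (S ω))
  have h_decomp := variance_mul_sub_add_eq_of_ae_eq_condExp (G := fun ω ↦ g (S ω))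
    (H := fun ω ↦ h (S ω)) hS.comap_le hY2 hm (hg.comp hS𝒢).aestronglyMeasurable hG
    (hh.comp hS𝒢).aestronglyMeasurable hH (∫ x, Y x ∂μ)
  have h_nonneg := variance_nonneg (fun ω ↦ g (S ω) * (m ω - ∫ x, Y x ∂μ) + h (S ω)) μ
  exact ⟨by linarith, h_nonneg, by linarith⟩
end

section
/- Let Y be a {0,1}-valued random variable on a probability space with S a real-valued random variable, let m denote a version of the conditional expectation E[Y | σ(S)], and let g : ℝ → ℝ be a bounded measurable function. Then Var[ g(S)·(1 − Y) ] − Var[ g(S)·(Y − m) ] = Var[ g(S)·(1 − m) ] ≥ 0; in particular Var[ g(S)·(1 − Y) ] ≥ Var[ g(S)·(Y − m) ]. -/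
/-!
Write `G = g ∘ S`. Then `g(S)(1 - Y) = G - G Y`, and by the pull-out property
`E[G Y | σ(S)] = G m`, so `g(S)(Y - m)` and `g(S)(1 - m)` are `G Y - E[G Y | σ(S)]` and
`G - E[G Y | σ(S)]`. The residual `G Y - E[G Y | σ(S)]` is uncorrelated with every
square-integrable `σ(S)`-measurable variable, in particular with `G - E[G Y | σ(S)]`, so the
variance of their difference `G - G Y` splits as the sum of their variances.
-/

open MeasureTheory ProbabilityTheory

section ConditionalResidual

variable {Ω : Type*} {m mΩ : MeasurableSpace Ω} {μ : Measure Ω} {X Y : Ω → ℝ}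

lemma integral_mul_condExp (hm : m ≤ mΩ) [SigmaFinite (μ.trim hm)]
    (hX : StronglyMeasurable[m] X) (hXY : Integrable (X * Y) μ) (hY : Integrable Y μ) :
    μ[X * μ[Y | m]] = μ[X * Y] := by
  rw [← integral_condExp hm (f := X * Y)]
  exact integral_congr_ae (condExp_mul_of_stronglyMeasurable_left hX hXY hY).symm

variable [IsProbabilityMeasure μ]

lemma covariance_condExp_right (hm : m ≤ mΩ) (hX : StronglyMeasurable[m] X)
    (hX₂ : MemLp X 2 μ) (hY₂ : MemLp Y 2 μ) :
    cov[X, μ[Y | m]; μ] = cov[X, Y; μ] := by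
  rw [covariance_eq_sub hX₂ (hY₂.condExp one_le_two), covariance_eq_sub hX₂ hY₂,
    integral_mul_condExp hm hX (hX₂.integrable_mul hY₂) (hY₂.integrable one_le_two),
    integral_condExp hm]

lemma covariance_sub_condExp_eq_zero_s5 (hm : m ≤ mΩ) (hX : StronglyMeasurable[m] X)
    (hX₂ : MemLp X 2 μ) (hY₂ : MemLp Y 2 μ) :
    cov[X, Y - μ[Y | m]; μ] = 0 := by
  rw [covariance_sub_right hX₂ hY₂ (hY₂.condExp one_le_two),
    covariance_condExp_right hm hX hX₂ hY₂, sub_self]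

lemma variance_sub_eq_variance_sub_condExp_add (hm : m ≤ mΩ) (hX : StronglyMeasurable[m] X)
    (hX₂ : MemLp X 2 μ) (hY₂ : MemLp Y 2 μ) :
    Var[X - Y; μ] = Var[X - μ[Y | m]; μ] + Var[Y - μ[Y | m]; μ] := by
  have hYm₂ : MemLp (μ[Y | m]) 2 μ := hY₂.condExp one_le_two
  have hcov : cov[X - μ[Y | m], Y - μ[Y | m]; μ] = 0 :=
    covariance_sub_condExp_eq_zero_s5 hm (hX.sub stronglyMeasurable_condExp) (hX₂.sub hYm₂) hY₂
  rw [show X - Y = (X - μ[Y | m]) - (Y - μ[Y | m]) by abel,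
    variance_sub (hX₂.sub hYm₂) (hY₂.sub hYm₂), hcov]
  ring

end ConditionalResidual

/-- **Corollary 2 (efficiency gain of the ssROC threshold estimator)**: for a binary
label `Y`, score `S`, a version `m` of `E[Y | σ(S)]`, and bounded measurable `g`,
`Var[g(S)(1 − Y)] − Var[g(S)(Y − m)] = Var[g(S)(1 − m)] ≥ 0`; in particular
`Var[g(S)(1 − Y)] ≥ Var[g(S)(Y − m)]`. -/
theorem stmt_5 {Ω : Type*} [MeasurableSpace Ω] (μ : Measure Ω) [IsProbabilityMeasure μ]
    (Y S : Ω → ℝ) (hY : Measurable Y) (hS : Measurable S)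
    (hY01 : ∀ ω, Y ω = 0 ∨ Y ω = 1)
    (m : Ω → ℝ)
    (hm : m =ᵐ[μ] μ[Y | MeasurableSpace.comap S inferInstance])
    (g : ℝ → ℝ) (hg : Measurable g)
    (Cg : ℝ) (hgb : ∀ x, |g x| ≤ Cg) :
    (variance (fun ω => g (S ω) * (1 - Y ω)) μ
        - variance (fun ω => g (S ω) * (Y ω - m ω)) μ
      = variance (fun ω => g (S ω) * (1 - m ω)) μ)
    ∧ 0 ≤ variance (fun ω => g (S ω) * (1 - m ω)) μ
    ∧ variance (fun ω => g (S ω) * (Y ω - m ω)) μ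
        ≤ variance (fun ω => g (S ω) * (1 - Y ω)) μ := by
  set mS : MeasurableSpace Ω := MeasurableSpace.comap S inferInstance
  set G : Ω → ℝ := fun ω => g (S ω)
  have hYb : ∀ ω, |Y ω| ≤ 1 := fun ω => by rcases hY01 ω with h | h <;> simp [h]
  have hGS : StronglyMeasurable[mS] G := (hg.comp (comap_measurable S)).stronglyMeasurable
  have hG₂ : MemLp G 2 μ := .of_bound (hg.comp hS).aestronglyMeasurable Cg
    (.of_forall fun ω => hgb (S ω))
  have hGY₂ : MemLp (G * Y) 2 μ := .of_bound ((hg.comp hS).mul hY).aestronglyMeasurable Cg <|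
    .of_forall fun ω => by
      simpa [abs_mul] using
        mul_le_mul (hgb (S ω)) (hYb ω) (abs_nonneg _) ((abs_nonneg _).trans (hgb 0))
  have hYint : Integrable Y μ := .of_bound hY.aestronglyMeasurable 1 (.of_forall hYb)
  have hpull : μ[G * Y | mS] =ᵐ[μ] G * m := by
    filter_upwards [condExp_mul_of_stronglyMeasurable_left hGS (hGY₂.integrable one_le_two) hYint,
      hm] with ω hω hmω
    rw [hω, Pi.mul_apply, Pi.mul_apply, hmω]
  have hsup : (fun ω => g (S ω) * (1 - Y ω)) = G - G * Y := by
    ext ω; simp only [Pi.sub_apply, Pi.mul_apply, G]; ring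
  have hsemi : Var[fun ω => g (S ω) * (Y ω - m ω); μ] = Var[G * Y - μ[G * Y | mS]; μ] :=
    variance_congr <| by
      filter_upwards [hpull] with ω hω
      simp only [Pi.sub_apply, Pi.mul_apply, hω, G]; ring
  have hgain : Var[fun ω => g (S ω) * (1 - m ω); μ] = Var[G - μ[G * Y | mS]; μ] :=
    variance_congr <| by
      filter_upwards [hpull] with ω hω
      simp only [Pi.sub_apply, Pi.mul_apply, hω, G]; ring
  rw [hsup, hsemi, hgain, variance_sub_eq_variance_sub_condExp_add hS.comap_le hGS hG₂ hGY₂]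
  exact ⟨by ring, variance_nonneg _ _, le_add_of_nonneg_left (variance_nonneg _ _)⟩
end
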